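/- Let λ ≥ 1 and let β ∈ C_c^∞((1/2, 2)) and β̃ ∈ C^∞ with β̃ = 1 on (1/4, 4) and supp β̃ ⊂ (2^{-10}, 2^{10}). Define for μ ≥ 0 and t, s ∈ ℝ: α(t,s;μ) = ∫_{-∞}^∞ e^{i(t-s)τ} (−λτ − μ² + iλ)^{-1} β(−τ/λ)(1 − β̃²(μ/λ)) dτ. Then there is a constant C (depending on β, β̃ but not on λ, t, s, μ) such that |α(t,s;μ)| ≤ C λ (1 + λ|t−s|)^{-2} (μ² + λ²)^{-1}. -/

import Mathlib

open MeasureTheory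

private lemma my_integral_deriv_eq_zero (G G' : ℝ → ℂ)
    (h : ∀ x, HasDerivAt G (G' x) x) (hG : HasCompactSupport G) (hG' : Continuous G') :
    ∫ x : ℝ, G' x = 0 := by
  have hd : deriv G = G' := funext fun x => (h x).deriv
  have hC1 : ContDiff ℝ 1 G :=
    contDiff_one_iff_deriv.mpr ⟨fun x => (h x).differentiableAt, hd ▸ hG'⟩
  have hint : Integrable G' := hG'.integrable_of_hasCompactSupport (hd ▸ hG.deriv)
  have h1 := hG.integral_Iic_deriv_eq hC1 0
  have h2 := hG.integral_Ioi_deriv_eq hC1 0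
  rw [hd] at h1 h2
  rw [← intervalIntegral.integral_Iic_add_Ioi (b := 0) hint.integrableOn hint.integrableOn, h1, h2]
  ring

private lemma my_ibp_step (c : ℂ) (H H' : ℝ → ℂ)
    (h : ∀ τ, HasDerivAt H (H' τ) τ) (hH : HasCompactSupport H) (hH' : Continuous H') :
    ∫ τ : ℝ, Complex.exp (Complex.I * c * τ) * H' τ
      = -(Complex.I * c) * ∫ τ : ℝ, Complex.exp (Complex.I * c * τ) * H τ := by
  have hHc : Continuous H := by
    rw [continuous_iff_continuousAt]; exact fun x => (h x).continuousAt
  have hEd : ∀ τ : ℝ, HasDerivAt (fun τ : ℝ => Complex.exp (Complex.I * c * τ))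
      (Complex.I * c * Complex.exp (Complex.I * c * τ)) τ := by
    intro τ
    have h1 : HasDerivAt (fun τ : ℝ => ((τ : ℝ) : ℂ)) 1 τ := (hasDerivAt_id τ).ofReal_comp
    have h2 : HasDerivAt (fun τ : ℝ => Complex.I * c * (τ : ℂ)) (Complex.I * c) τ := by
      simpa using h1.const_mul (Complex.I * c)
    simpa [mul_comm] using h2.cexp
  have hEc : Continuous fun τ : ℝ => Complex.exp (Complex.I * c * τ) :=
    Complex.continuous_exp.comp (continuous_const.mul Complex.continuous_ofReal)
  have hder : H' = deriv H := funext fun x => ((h x).deriv).symm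
  have hH's : HasCompactSupport H' := hder ▸ hH.deriv
  have hG : ∀ τ : ℝ, HasDerivAt (fun τ : ℝ => Complex.exp (Complex.I * c * τ) * H τ)
      (Complex.I * c * Complex.exp (Complex.I * c * τ) * H τ
        + Complex.exp (Complex.I * c * τ) * H' τ) τ := fun τ => (hEd τ).mul (h τ)
  have hsupp : HasCompactSupport fun τ : ℝ => Complex.exp (Complex.I * c * τ) * H τ :=
    hH.mul_left
  have int1 : Integrable fun τ : ℝ => Complex.I * c * Complex.exp (Complex.I * c * τ) * H τ :=
    (((continuous_const.mul hEc).mul hHc)).integrable_of_hasCompactSupport hH.mul_left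
  have int2 : Integrable fun τ : ℝ => Complex.exp (Complex.I * c * τ) * H' τ :=
    (hEc.mul hH').integrable_of_hasCompactSupport hH's.mul_left
  have hzero : ∫ τ : ℝ, (Complex.I * c * Complex.exp (Complex.I * c * τ) * H τ
      + Complex.exp (Complex.I * c * τ) * H' τ) = 0 :=
    my_integral_deriv_eq_zero _ _ hG hsupp
      (((continuous_const.mul hEc).mul hHc).add (hEc.mul hH'))
  rw [integral_add int1 int2] at hzero
  have hpull : ∫ τ : ℝ, Complex.I * c * Complex.exp (Complex.I * c * τ) * H τ
      = (Complex.I * c) * ∫ τ : ℝ, Complex.exp (Complex.I * c * τ) * H τ := by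
    rw [← integral_const_mul]
    congr 1; funext τ; ring
  rw [hpull] at hzero
  linear_combination hzero

set_option maxHeartbeats 4000000 in
/-- The kernel bound for the "frozen" operators: with `β ∈ C_c^∞((1/2,2))` and
`β̃ ∈ C^∞` equal to `1` on `(1/4,4)` and supported in `(2^{-10}, 2^{10})`, the
oscillatory integral `α(t,s;μ)` satisfies
`|α(t,s;μ)| ≤ C λ (1+λ|t-s|)^{-2} (μ²+λ²)^{-1}` uniformly in `λ ≥ 1`, `t,s ∈ ℝ`, `μ ≥ 0`. -/
theorem stmt3 (β βt : ℝ → ℝ)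
    (hβ : ContDiff ℝ (⊤ : ℕ∞) β) (hβsupp : Function.support β ⊆ Set.Ioo (1/2 : ℝ) 2)
    (hβt : ContDiff ℝ (⊤ : ℕ∞) βt) (hβt1 : ∀ x ∈ Set.Ioo (1/4 : ℝ) 4, βt x = 1)
    (hβtsupp : Function.support βt ⊆ Set.Ioo ((2:ℝ) ^ (-10 : ℤ)) ((2:ℝ) ^ (10 : ℤ))) :
    ∃ C : ℝ, 0 < C ∧ ∀ lam : ℝ, 1 ≤ lam → ∀ t s μ : ℝ, 0 ≤ μ →
      ‖∫ τ : ℝ, Complex.exp (Complex.I * (↑t - ↑s) * ↑τ) *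
          (-(lam : ℂ) * ↑τ - (μ : ℂ) ^ 2 + Complex.I * (lam : ℂ))⁻¹ *
          ((β (-τ / lam) : ℝ) : ℂ) * (1 - ((βt (μ / lam) : ℝ) : ℂ) ^ 2)‖ ≤
        C * lam * (1 + lam * |t - s|) ^ (-2 : ℝ) * (μ ^ 2 + lam ^ 2)⁻¹ := by
  -- smoothness and support facts for β
  have h1inf : (1 : WithTop ℕ∞) ≤ ((⊤ : ℕ∞) : WithTop ℕ∞) := by
    exact_mod_cast (le_top : (1 : ℕ∞) ≤ ⊤)
  have hbS : ContDiff ℝ ((⊤ : ℕ∞) : WithTop ℕ∞) β := hβ.of_le (by simp)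
  have hb1S : ContDiff ℝ ((⊤ : ℕ∞) : WithTop ℕ∞) (deriv β) := (contDiff_infty_iff_deriv.mp hbS).2
  have hb2S : ContDiff ℝ ((⊤ : ℕ∞) : WithTop ℕ∞) (deriv (deriv β)) :=
    (contDiff_infty_iff_deriv.mp hb1S).2
  have hβc : Continuous β := hbS.continuous
  have hβ'c : Continuous (deriv β) := hb1S.continuous
  have hβ''c : Continuous (deriv (deriv β)) := hb2S.continuous
  have hβdiff : Differentiable ℝ β := hbS.differentiable (by simp)
  have hβ'diff : Differentiable ℝ (deriv β) := hb1S.differentiable (by simp)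
  have hβcs : HasCompactSupport β := by
    apply HasCompactSupport.intro (isCompact_Icc (a := (1/2 : ℝ)) (b := 2))
    intro x hx
    by_contra hne
    exact hx (Set.Ioo_subset_Icc_self (hβsupp hne))
  have hβ'cs : HasCompactSupport (deriv β) := hβcs.deriv
  have hβ''cs : HasCompactSupport (deriv (deriv β)) := hβ'cs.deriv
  obtain ⟨M0, hM0⟩ := hβcs.exists_bound_of_continuous hβc
  obtain ⟨M1, hM1⟩ := hβ'cs.exists_bound_of_continuous hβ'c
  obtain ⟨M2, hM2⟩ := hβ''cs.exists_bound_of_continuous hβ''c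
  have hM0' : 0 ≤ M0 := le_trans (norm_nonneg _) (hM0 0)
  have hM1' : 0 ≤ M1 := le_trans (norm_nonneg _) (hM1 0)
  have hM2' : 0 ≤ M2 := le_trans (norm_nonneg _) (hM2 0)
  -- β and its derivatives vanish outside `Icc (1/2) 2`
  have htsβ : tsupport β ⊆ Set.Icc (1/2 : ℝ) 2 := by
    refine (closure_mono (hβsupp.trans Set.Ioo_subset_Icc_self)).trans ?_
    rw [isClosed_Icc.closure_eq]
  have hβ0 : ∀ x ∉ Set.Icc (1/2 : ℝ) 2, β x = 0 := by
    intro x hx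
    by_contra hne
    exact hx (htsβ (subset_tsupport β hne))
  have hβ'0 : ∀ x ∉ Set.Icc (1/2 : ℝ) 2, deriv β x = 0 := by
    intro x hx
    by_contra hne
    exact hx (htsβ (support_deriv_subset hne))
  have htsβ' : tsupport (deriv β) ⊆ Set.Icc (1/2 : ℝ) 2 := by
    have hsub : Function.support (deriv β) ⊆ Set.Icc (1/2 : ℝ) 2 := by
      intro x hx
      by_contra hmem
      exact hx (hβ'0 x hmem)
    refine (closure_mono hsub).trans ?_
    rw [isClosed_Icc.closure_eq]
  have hβ''0 : ∀ x ∉ Set.Icc (1/2 : ℝ) 2, deriv (deriv β) x = 0 := by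
    intro x hx
    by_contra hne
    exact hx (htsβ' (support_deriv_subset hne))
  -- bound for βt
  have hβtcs : HasCompactSupport βt := by
    apply HasCompactSupport.intro
      (isCompact_Icc (a := ((2:ℝ) ^ (-10 : ℤ))) (b := (2:ℝ) ^ (10 : ℤ)))
    intro x hx
    by_contra hne
    exact hx (Set.Ioo_subset_Icc_self (hβtsupp hne))
  obtain ⟨Mt, hMt⟩ := hβtcs.exists_bound_of_continuous hβt.continuous
  have hMt' : 0 ≤ Mt := le_trans (norm_nonneg _) (hMt 0)
  -- the constant
  set K0 : ℝ := 1 + Mt ^ 2 with hK0def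
  have hK0pos : 0 < K0 := by positivity
  set C2 : ℝ := 250 * M0 + 50 * M1 + 5 * M2 with hC2def
  have hC2nonneg : 0 ≤ C2 := by rw [hC2def]; linarith
  have hM0K0 : (0 : ℝ) ≤ M0 * K0 := mul_nonneg hM0' hK0pos.le
  have hC2K0 : (0 : ℝ) ≤ C2 * K0 := mul_nonneg hC2nonneg hK0pos.le
  refine ⟨30 * (M0 * K0) + 6 * (C2 * K0) + 1, by nlinarith, ?_⟩
  intro lam hlam t s μ hμ
  have hlam0 : (0 : ℝ) < lam := lt_of_lt_of_le one_pos hlam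
  have hlamne : ((lam : ℝ) : ℂ) ≠ 0 := by
    simpa using ne_of_gt hlam0
  have hd2 : (0 : ℝ) < μ ^ 2 + lam ^ 2 := by positivity
  set d : ℝ := μ ^ 2 + lam ^ 2 with hddef
  set ξ : ℂ := (t : ℂ) - s with hξdef
  set K : ℂ := 1 - ((βt (μ / lam) : ℝ) : ℂ) ^ 2 with hKdef
  set D : ℝ → ℂ := fun τ => -(lam : ℂ) * τ - (μ : ℂ) ^ 2 + Complex.I * lam with hDdef
  have hD0 : ∀ τ : ℝ, D τ ≠ 0 := by
    intro τ h
    have him : (D τ).im = lam := by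
      simp [hDdef, Complex.add_im, Complex.sub_im, Complex.mul_im, pow_two]
    rw [h] at him
    simp at him
    linarith
  set J : ℝ → ℂ := fun τ => (D τ)⁻¹ with hJdef
  set B0 : ℝ → ℂ := fun τ => ((β (-τ / lam) : ℝ) : ℂ) with hB0def
  set B1 : ℝ → ℂ := fun τ => ((deriv β (-τ / lam) : ℝ) : ℂ) with hB1def
  set B2 : ℝ → ℂ := fun τ => ((deriv (deriv β) (-τ / lam) : ℝ) : ℂ) with hB2def
  set E : ℝ → ℂ := fun τ => Complex.exp (Complex.I * ξ * τ) with hEdef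
  set F0 : ℝ → ℂ := fun τ => J τ * B0 τ * K with hF0def
  set F1 : ℝ → ℂ := fun τ =>
    ((lam : ℂ) * (J τ * J τ) * B0 τ - 1 / (lam : ℂ) * J τ * B1 τ) * K with hF1def
  set F2 : ℝ → ℂ := fun τ =>
    (2 * (lam : ℂ) ^ 2 * (J τ * J τ * J τ) * B0 τ - 2 * (J τ * J τ) * B1 τ
      + 1 / (lam : ℂ) ^ 2 * J τ * B2 τ) * K with hF2def
  -- identify the integrand
  have hEq : (fun τ : ℝ => Complex.exp (Complex.I * ξ * ↑τ) *
      (-(lam : ℂ) * ↑τ - (μ : ℂ) ^ 2 + Complex.I * (lam : ℂ))⁻¹ *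
      ((β (-τ / lam) : ℝ) : ℂ) * K)
      = fun τ : ℝ => E τ * F0 τ := by
    funext τ
    simp only [hEdef, hF0def, hJdef, hB0def, hDdef]
    ring
  rw [hEq]
  -- the RHS is nonnegative
  have hrpow_pos : (0 : ℝ) < (1 + lam * |t - s|) ^ (-2 : ℝ) := by
    apply Real.rpow_pos_of_pos
    have : 0 ≤ lam * |t - s| := mul_nonneg hlam0.le (abs_nonneg _)
    linarith
  have hRHS0 : 0 ≤ (30 * (M0 * K0) + 6 * (C2 * K0) + 1) * lam *
      (1 + lam * |t - s|) ^ (-2 : ℝ) * d⁻¹ := by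
    have h1 : (0 : ℝ) ≤ (30 * (M0 * K0) + 6 * (C2 * K0) + 1) * lam := by nlinarith
    exact mul_nonneg (mul_nonneg h1 hrpow_pos.le) (inv_pos.mpr hd2).le
  -- trivial case : K = 0
  by_cases hK : K = 0
  · have hzfun : (fun τ : ℝ => E τ * F0 τ) = fun _ : ℝ => (0 : ℂ) := by
      funext τ; simp [hF0def, hK]
    rw [hzfun]
    simpa using hRHS0
  -- main case: μ is far from lam
  have hμfar : μ ≤ lam / 4 ∨ 4 * lam ≤ μ := by
    by_contra hcon
    push_neg at hcon
    obtain ⟨h1, h2⟩ := hcon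
    have hmem : μ / lam ∈ Set.Ioo (1/4 : ℝ) 4 := by
      constructor
      · rw [lt_div_iff₀ hlam0]; linarith
      · rw [div_lt_iff₀ hlam0]; linarith
    apply hK
    rw [hKdef, hβt1 _ hmem]
    norm_num
  -- the support interval
  set S : Set ℝ := Set.Icc (-(2 * lam)) (-(lam / 2)) with hSdef
  have hmapS : ∀ τ : ℝ, -τ / lam ∈ Set.Icc (1/2 : ℝ) 2 → τ ∈ S := by
    intro τ hτ
    rw [Set.mem_Icc] at hτ
    rw [hSdef, Set.mem_Icc]
    obtain ⟨ha, hb⟩ := hτ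
    have ha' : (1/2 : ℝ) * lam ≤ -τ := (le_div_iff₀ hlam0).mp ha
    have hb' : -τ ≤ 2 * lam := (div_le_iff₀ hlam0).mp hb
    constructor <;> linarith
  have hB0S : ∀ τ ∉ S, B0 τ = 0 := by
    intro τ hτ
    have h0 : -τ / lam ∉ Set.Icc (1/2 : ℝ) 2 := fun h => hτ (hmapS τ h)
    simp [hB0def, hβ0 _ h0]
  have hB1S : ∀ τ ∉ S, B1 τ = 0 := by
    intro τ hτ
    have h0 : -τ / lam ∉ Set.Icc (1/2 : ℝ) 2 := fun h => hτ (hmapS τ h)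
    simp [hB1def, hβ'0 _ h0]
  have hB2S : ∀ τ ∉ S, B2 τ = 0 := by
    intro τ hτ
    have h0 : -τ / lam ∉ Set.Icc (1/2 : ℝ) 2 := fun h => hτ (hmapS τ h)
    simp [hB2def, hβ''0 _ h0]
  -- continuity
  have hDc : Continuous D := by
    rw [hDdef]
    exact ((continuous_const.mul Complex.continuous_ofReal).sub continuous_const).add
      continuous_const
  have hJc : Continuous J := by
    rw [hJdef]; exact hDc.inv₀ hD0
  have hinnerc : Continuous fun τ : ℝ => -τ / lam := continuous_id.neg.div_const lam
  have hB0c : Continuous B0 := by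
    rw [hB0def]; exact Complex.continuous_ofReal.comp (hβc.comp hinnerc)
  have hB1c : Continuous B1 := by
    rw [hB1def]; exact Complex.continuous_ofReal.comp (hβ'c.comp hinnerc)
  have hB2c : Continuous B2 := by
    rw [hB2def]; exact Complex.continuous_ofReal.comp (hβ''c.comp hinnerc)
  have hEc : Continuous E := by
    rw [hEdef]
    exact Complex.continuous_exp.comp (continuous_const.mul Complex.continuous_ofReal)
  have hF0c : Continuous F0 := by
    rw [hF0def]; exact (hJc.mul hB0c).mul continuous_const
  have hF1c : Continuous F1 := by
    rw [hF1def]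
    exact (((continuous_const.mul (hJc.mul hJc)).mul hB0c).sub
      ((continuous_const.mul hJc).mul hB1c)).mul continuous_const
  have hF2c : Continuous F2 := by
    rw [hF2def]
    exact ((((continuous_const.mul ((hJc.mul hJc).mul hJc)).mul hB0c).sub
      ((continuous_const.mul (hJc.mul hJc)).mul hB1c)).add
      ((continuous_const.mul hJc).mul hB2c)).mul continuous_const
  -- compact supports
  have hF0cs : HasCompactSupport F0 := by
    apply HasCompactSupport.intro (isCompact_Icc (a := (-(2 * lam))) (b := -(lam / 2)))
    intro τ hτ
    have hτ' : τ ∉ S := by rw [hSdef]; exact hτ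
    simp [hF0def, hB0S τ hτ']
  have hF1cs : HasCompactSupport F1 := by
    apply HasCompactSupport.intro (isCompact_Icc (a := (-(2 * lam))) (b := -(lam / 2)))
    intro τ hτ
    have hτ' : τ ∉ S := by rw [hSdef]; exact hτ
    simp [hF1def, hB0S τ hτ', hB1S τ hτ']
  -- derivatives
  have hτd : ∀ τ : ℝ, HasDerivAt (fun τ : ℝ => ((τ : ℝ) : ℂ)) 1 τ :=
    fun τ => (hasDerivAt_id τ).ofReal_comp
  have hDd : ∀ τ : ℝ, HasDerivAt D (-(lam : ℂ)) τ := by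
    intro τ
    rw [hDdef]
    have h1 : HasDerivAt (fun τ : ℝ => -(lam : ℂ) * τ) (-(lam : ℂ)) τ := by
      simpa using (hτd τ).const_mul (-(lam : ℂ))
    exact (h1.sub_const ((μ : ℂ) ^ 2)).add_const (Complex.I * (lam : ℂ))
  have hJd : ∀ τ : ℝ, HasDerivAt J ((lam : ℂ) * (J τ * J τ)) τ := by
    intro τ
    have h1 : HasDerivAt (fun τ : ℝ => (D τ)⁻¹) ((-(lam : ℂ)) • (-(D τ ^ 2)⁻¹)) τ :=
      (hasDerivAt_inv (hD0 τ)).scomp τ (hDd τ)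
    have h2 : HasDerivAt (fun τ => (D τ)⁻¹) ((lam : ℂ) * (J τ * J τ)) τ := by
      refine h1.congr_deriv ?_
      simp only [hJdef, smul_eq_mul, pow_two, mul_inv]
      ring
    rw [hJdef]
    exact h2
  have hinner : ∀ τ : ℝ, HasDerivAt (fun τ : ℝ => -τ / lam) (-1 / lam) τ := by
    intro τ
    simpa using ((hasDerivAt_id τ).neg.div_const lam)
  have hB0d : ∀ τ : ℝ, HasDerivAt B0 (-(1 / (lam : ℂ)) * B1 τ) τ := by
    intro τ
    have h1 : HasDerivAt (fun τ : ℝ => β (-τ / lam)) (deriv β (-τ / lam) * (-1 / lam)) τ :=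
      (hβdiff (-τ / lam)).hasDerivAt.comp τ (hinner τ)
    have h2 := h1.ofReal_comp
    rw [hB0def]
    refine h2.congr_deriv ?_
    simp only [hB1def]
    push_cast
    ring
  have hB1d : ∀ τ : ℝ, HasDerivAt B1 (-(1 / (lam : ℂ)) * B2 τ) τ := by
    intro τ
    have h1 : HasDerivAt (fun τ : ℝ => deriv β (-τ / lam))
        (deriv (deriv β) (-τ / lam) * (-1 / lam)) τ :=
      by have := (hβ'diff (-τ / lam)).hasDerivAt.comp τ (hinner τ); exact this
    have h2 := h1.ofReal_comp
    rw [hB1def]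
    refine h2.congr_deriv ?_
    simp only [hB2def]
    push_cast
    ring
  have hF0d : ∀ τ : ℝ, HasDerivAt F0 (F1 τ) τ := by
    intro τ
    rw [hF0def]
    refine (((hJd τ).mul (hB0d τ)).mul_const K).congr_deriv ?_
    simp only [hF1def]
    ring
  have hF1d : ∀ τ : ℝ, HasDerivAt F1 (F2 τ) τ := by
    intro τ
    have hp : HasDerivAt (fun x : ℝ => J x * J x)
        ((lam : ℂ) * (J τ * J τ) * J τ + J τ * ((lam : ℂ) * (J τ * J τ))) τ :=
      (hJd τ).mul (hJd τ)
    have hA : HasDerivAt (fun x : ℝ => (lam : ℂ) * (J x * J x) * B0 x)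
        ((lam : ℂ) * ((lam : ℂ) * (J τ * J τ) * J τ + J τ * ((lam : ℂ) * (J τ * J τ))) * B0 τ
          + (lam : ℂ) * (J τ * J τ) * (-(1 / (lam : ℂ)) * B1 τ)) τ :=
      (hp.const_mul ((lam : ℂ))).mul (hB0d τ)
    have hB : HasDerivAt (fun x : ℝ => 1 / (lam : ℂ) * J x * B1 x)
        (1 / (lam : ℂ) * ((lam : ℂ) * (J τ * J τ)) * B1 τ
          + 1 / (lam : ℂ) * J τ * (-(1 / (lam : ℂ)) * B2 τ)) τ :=
      (((hJd τ).const_mul (1 / (lam : ℂ))).mul (hB1d τ))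
    rw [hF1def]
    refine ((hA.sub hB).mul_const K).congr_deriv ?_
    simp only [hF2def]
    field_simp
    ring
  -- norm facts
  have hE1 : ∀ τ : ℝ, ‖E τ‖ = 1 := by
    intro τ
    rw [hEdef]
    simp only [Complex.norm_exp]
    have hre0 : (Complex.I * ξ * (τ : ℂ)).re = 0 := by
      simp [hξdef, Complex.mul_re, Complex.mul_im]
    rw [hre0, Real.exp_zero]
  have hKb : ‖K‖ ≤ K0 := by
    rw [hKdef, hK0def]
    refine (norm_sub_le _ _).trans ?_
    have h1 : ‖((βt (μ / lam) : ℝ) : ℂ) ^ 2‖ ≤ Mt ^ 2 := by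
      rw [norm_pow, Complex.norm_real]
      exact pow_le_pow_left₀ (norm_nonneg _) (hMt _) 2
    simpa using h1
  have hB0b : ∀ τ : ℝ, ‖B0 τ‖ ≤ M0 := by
    intro τ; rw [hB0def]; simpa [Complex.norm_real] using hM0 (-τ / lam)
  have hB1b : ∀ τ : ℝ, ‖B1 τ‖ ≤ M1 := by
    intro τ; rw [hB1def]; simpa [Complex.norm_real] using hM1 (-τ / lam)
  have hB2b : ∀ τ : ℝ, ‖B2 τ‖ ≤ M2 := by
    intro τ; rw [hB2def]; simpa [Complex.norm_real] using hM2 (-τ / lam)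
  -- the resolvent bound on S
  have hJb : ∀ τ ∈ S, ‖J τ‖ ≤ 5 / d := by
    intro τ hτ
    rw [hSdef, Set.mem_Icc] at hτ
    obtain ⟨hτ1, hτ2⟩ := hτ
    have hre : (D τ).re = -lam * τ - μ ^ 2 := by
      simp [hDdef, Complex.add_re, Complex.sub_re, Complex.mul_re, sq]
    have hrebig : d / 5 ≤ |(D τ).re| := by
      rw [hre]
      rcases hμfar with hcase | hcase
      · have h1 : d / 5 ≤ -lam * τ - μ ^ 2 := by
          rw [hddef]
          nlinarith [mul_le_mul_of_nonneg_left hτ2 hlam0.le,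
            mul_le_mul hcase hcase hμ (by linarith : (0:ℝ) ≤ lam / 4)]
        exact h1.trans (le_abs_self _)
      · have h1 : d / 5 ≤ -(-lam * τ - μ ^ 2) := by
          rw [hddef]
          nlinarith [mul_le_mul_of_nonneg_left hτ1 hlam0.le,
            mul_le_mul hcase hcase (by linarith : (0:ℝ) ≤ 4 * lam) (by linarith : (0:ℝ) ≤ μ)]
        exact h1.trans (neg_le_abs _)
    have hDb : d / 5 ≤ ‖D τ‖ := by
      refine hrebig.trans ?_
      exact Complex.abs_re_le_norm _
    have hd5 : (0 : ℝ) < d / 5 := div_pos hd2 (by norm_num)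
    have hJn : ‖J τ‖ = ‖D τ‖⁻¹ := by
      rw [hJdef]; simp
    rw [hJn]
    calc ‖D τ‖⁻¹ ≤ (d / 5)⁻¹ := inv_anti₀ hd5 hDb
      _ = 5 / d := by rw [inv_div]
  -- volume facts
  have hSvol : volume S < ⊤ := by
    rw [hSdef, Real.volume_Icc]
    exact ENNReal.ofReal_lt_top
  have hSvol' : (volume S).toReal = 3 * lam / 2 := by
    rw [hSdef, Real.volume_Icc, ENNReal.toReal_ofReal (by linarith)]
    ring
  set X : ℝ := ‖∫ τ : ℝ, E τ * F0 τ‖ with hXdef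
  have hX0 : 0 ≤ X := norm_nonneg _
  have h5d : (0 : ℝ) ≤ 5 / d := le_of_lt (div_pos (by norm_num) hd2)
  -- trivial bound
  have hbound1 : X * d ≤ (15 / 2) * (M0 * K0) * lam := by
    have hzero : ∀ τ ∉ S, E τ * F0 τ = 0 := by
      intro τ hτ
      simp [hF0def, hB0S τ hτ]
    have hptwise : ∀ τ ∈ S, ‖E τ * F0 τ‖ ≤ 5 / d * M0 * K0 := by
      intro τ hτ
      calc ‖E τ * F0 τ‖ = ‖J τ‖ * ‖B0 τ‖ * ‖K‖ := by
            rw [norm_mul, hE1 τ, one_mul, hF0def]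
            simp [norm_mul]
        _ ≤ 5 / d * M0 * K0 :=
            mul_le_mul (mul_le_mul (hJb τ hτ) (hB0b τ) (norm_nonneg _) h5d)
              hKb (norm_nonneg _) (mul_nonneg h5d hM0')
    have hXle : X ≤ (5 / d * M0 * K0) * (3 * lam / 2) := by
      rw [hXdef, ← setIntegral_eq_integral_of_forall_compl_eq_zero hzero, ← hSvol']
      exact norm_setIntegral_le_of_norm_le_const hSvol hptwise
    calc X * d ≤ ((5 / d * M0 * K0) * (3 * lam / 2)) * d :=
          mul_le_mul_of_nonneg_right hXle hd2.le
      _ = (15 / 2) * (M0 * K0) * lam := by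
          field_simp
          ring
  -- integration by parts twice
  have hibp1 : ∫ τ : ℝ, E τ * F1 τ = -(Complex.I * ξ) * ∫ τ : ℝ, E τ * F0 τ := by
    simpa only [hEdef] using my_ibp_step ξ F0 F1 hF0d hF0cs hF1c
  have hibp2 : ∫ τ : ℝ, E τ * F2 τ = -(Complex.I * ξ) * ∫ τ : ℝ, E τ * F1 τ := by
    simpa only [hEdef] using my_ibp_step ξ F1 F2 hF1d hF1cs hF2c
  have hF2int : ∫ τ : ℝ, E τ * F2 τ
      = -(Complex.I * ξ) * (-(Complex.I * ξ) * ∫ τ : ℝ, E τ * F0 τ) := by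
    rw [hibp2, hibp1]
  have hnormIξ : ‖-(Complex.I * ξ)‖ = |t - s| := by
    rw [norm_neg, norm_mul, Complex.norm_I, one_mul, hξdef, ← Complex.ofReal_sub,
      Complex.norm_real, Real.norm_eq_abs]
  have hF2norm : ‖∫ τ : ℝ, E τ * F2 τ‖ = |t - s| ^ 2 * X := by
    rw [hF2int, norm_mul, norm_mul, hnormIξ, ← hXdef]; ring
  -- pointwise bound for F2
  have hF2ptwise : ∀ τ ∈ S, ‖E τ * F2 τ‖ ≤ C2 / (lam ^ 2 * d) * K0 := by
    intro τ hτ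
    have hj := hJb τ hτ
    have hjn : (0 : ℝ) ≤ ‖J τ‖ := norm_nonneg _
    have hdge : lam ^ 2 ≤ d := by rw [hddef]; nlinarith [sq_nonneg μ]
    have hj2 : ‖J τ‖ ≤ 5 / lam ^ 2 := by
      refine hj.trans ?_
      rw [div_le_div_iff₀ hd2 (by positivity)]
      nlinarith
    have h5l : (0 : ℝ) ≤ 5 / lam ^ 2 := by positivity
    have e0 : ‖E τ * F2 τ‖ = ‖2 * (lam : ℂ) ^ 2 * (J τ * J τ * J τ) * B0 τ
        - 2 * (J τ * J τ) * B1 τ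
        + 1 / (lam : ℂ) ^ 2 * J τ * B2 τ‖ * ‖K‖ := by
      rw [norm_mul, hE1 τ, one_mul]
      simp only [hF2def]
      rw [norm_mul]
    rw [e0]
    have tri : ‖2 * (lam : ℂ) ^ 2 * (J τ * J τ * J τ) * B0 τ - 2 * (J τ * J τ) * B1 τ
          + 1 / (lam : ℂ) ^ 2 * J τ * B2 τ‖
        ≤ ‖2 * (lam : ℂ) ^ 2 * (J τ * J τ * J τ) * B0 τ‖ + ‖2 * (J τ * J τ) * B1 τ‖
          + ‖1 / (lam : ℂ) ^ 2 * J τ * B2 τ‖ :=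
      (norm_add_le _ _).trans (add_le_add (norm_sub_le _ _) le_rfl)
    have n1 : ‖2 * (lam : ℂ) ^ 2 * (J τ * J τ * J τ) * B0 τ‖
        = 2 * lam ^ 2 * (‖J τ‖ ^ 3 * ‖B0 τ‖) := by
      simp only [norm_mul, norm_pow, Complex.norm_real, Real.norm_eq_abs, abs_of_pos hlam0]
      norm_num
      ring
    have n2 : ‖2 * (J τ * J τ) * B1 τ‖ = 2 * (‖J τ‖ ^ 2 * ‖B1 τ‖) := by
      simp only [norm_mul, norm_pow]
      norm_num
      ring
    have n3 : ‖1 / (lam : ℂ) ^ 2 * J τ * B2 τ‖ = 1 / lam ^ 2 * (‖J τ‖ * ‖B2 τ‖) := by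
      simp only [norm_mul, norm_div, norm_pow, norm_one, Complex.norm_real,
        Real.norm_eq_abs, abs_of_pos hlam0]
      ring
    have b1' : 2 * lam ^ 2 * (‖J τ‖ ^ 3 * ‖B0 τ‖)
        ≤ 2 * lam ^ 2 * (5 / lam ^ 2 * (5 / lam ^ 2) * (5 / d) * M0) := by
      apply mul_le_mul_of_nonneg_left _ (by positivity)
      have h3 : ‖J τ‖ ^ 3 ≤ 5 / lam ^ 2 * (5 / lam ^ 2) * (5 / d) := by
        calc ‖J τ‖ ^ 3 = ‖J τ‖ * ‖J τ‖ * ‖J τ‖ := by ring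
          _ ≤ 5 / lam ^ 2 * (5 / lam ^ 2) * (5 / d) :=
            mul_le_mul (mul_le_mul hj2 hj2 hjn h5l) hj hjn
              (mul_nonneg h5l h5l)
      exact mul_le_mul h3 (hB0b τ) (norm_nonneg _)
        (mul_nonneg (mul_nonneg h5l h5l) h5d)
    have b2' : 2 * (‖J τ‖ ^ 2 * ‖B1 τ‖) ≤ 2 * (5 / lam ^ 2 * (5 / d) * M1) := by
      apply mul_le_mul_of_nonneg_left _ (by norm_num)
      have h3 : ‖J τ‖ ^ 2 ≤ 5 / lam ^ 2 * (5 / d) := by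
        calc ‖J τ‖ ^ 2 = ‖J τ‖ * ‖J τ‖ := by ring
          _ ≤ 5 / lam ^ 2 * (5 / d) := mul_le_mul hj2 hj hjn h5l
      exact mul_le_mul h3 (hB1b τ) (norm_nonneg _) (mul_nonneg h5l h5d)
    have b3' : 1 / lam ^ 2 * (‖J τ‖ * ‖B2 τ‖) ≤ 1 / lam ^ 2 * (5 / d * M2) := by
      apply mul_le_mul_of_nonneg_left _ (by positivity)
      exact mul_le_mul hj (hB2b τ) (norm_nonneg _) h5d
    have hsum : ‖2 * (lam : ℂ) ^ 2 * (J τ * J τ * J τ) * B0 τ - 2 * (J τ * J τ) * B1 τ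
          + 1 / (lam : ℂ) ^ 2 * J τ * B2 τ‖
        ≤ 2 * lam ^ 2 * (5 / lam ^ 2 * (5 / lam ^ 2) * (5 / d) * M0)
          + 2 * (5 / lam ^ 2 * (5 / d) * M1) + 1 / lam ^ 2 * (5 / d * M2) := by
      refine tri.trans ?_
      rw [n1, n2, n3]
      exact add_le_add (add_le_add b1' b2') b3'
    have hbnn : (0 : ℝ) ≤ 2 * lam ^ 2 * (5 / lam ^ 2 * (5 / lam ^ 2) * (5 / d) * M0)
          + 2 * (5 / lam ^ 2 * (5 / d) * M1) + 1 / lam ^ 2 * (5 / d * M2) := by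
      have t1 : (0:ℝ) ≤ 2 * lam ^ 2 * (5 / lam ^ 2 * (5 / lam ^ 2) * (5 / d) * M0) :=
        mul_nonneg (by positivity) (mul_nonneg (mul_nonneg (mul_nonneg h5l h5l) h5d) hM0')
      have t2 : (0:ℝ) ≤ 2 * (5 / lam ^ 2 * (5 / d) * M1) :=
        mul_nonneg (by norm_num) (mul_nonneg (mul_nonneg h5l h5d) hM1')
      have t3 : (0:ℝ) ≤ 1 / lam ^ 2 * (5 / d * M2) :=
        mul_nonneg (by positivity) (mul_nonneg h5d hM2')
      linarith
    calc ‖2 * (lam : ℂ) ^ 2 * (J τ * J τ * J τ) * B0 τ - 2 * (J τ * J τ) * B1 τ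
          + 1 / (lam : ℂ) ^ 2 * J τ * B2 τ‖ * ‖K‖
        ≤ (2 * lam ^ 2 * (5 / lam ^ 2 * (5 / lam ^ 2) * (5 / d) * M0)
          + 2 * (5 / lam ^ 2 * (5 / d) * M1) + 1 / lam ^ 2 * (5 / d * M2)) * K0 :=
          mul_le_mul hsum hKb (norm_nonneg _) hbnn
      _ = C2 / (lam ^ 2 * d) * K0 := by
          rw [hC2def]
          field_simp
          ring
  -- integral bound after two integrations by parts
  have hbound2 : (X * d) * (lam * |t - s| ^ 2) ≤ (3 / 2) * (C2 * K0) := by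
    have hzero2 : ∀ τ ∉ S, E τ * F2 τ = 0 := by
      intro τ hτ
      simp [hF2def, hB0S τ hτ, hB1S τ hτ, hB2S τ hτ]
    have hint2 : ‖∫ τ : ℝ, E τ * F2 τ‖ ≤ (C2 / (lam ^ 2 * d) * K0) * (3 * lam / 2) := by
      rw [← setIntegral_eq_integral_of_forall_compl_eq_zero hzero2, ← hSvol']
      exact norm_setIntegral_le_of_norm_le_const hSvol hF2ptwise
    rw [hF2norm] at hint2
    calc (X * d) * (lam * |t - s| ^ 2) = (|t - s| ^ 2 * X) * (lam * d) := by ring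
      _ ≤ ((C2 / (lam ^ 2 * d) * K0) * (3 * lam / 2)) * (lam * d) :=
          mul_le_mul_of_nonneg_right hint2 (mul_nonneg hlam0.le hd2.le)
      _ = (3 / 2) * (C2 * K0) := by
          field_simp
  -- final assembly
  have hr0 : (0 : ℝ) ≤ |t - s| := abs_nonneg _
  have hXd0 : (0 : ℝ) ≤ X * d := mul_nonneg hX0 hd2.le
  have hbase : (0 : ℝ) < 1 + lam * |t - s| := by nlinarith
  have hrfact : (1 + lam * |t - s|) ^ (-2 : ℝ) = ((1 + lam * |t - s|) ^ (2 : ℕ))⁻¹ := by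
    rw [show (-2 : ℝ) = -((2 : ℕ) : ℝ) by norm_num, Real.rpow_neg hbase.le, Real.rpow_natCast]
  rw [hrfact]
  have hform : (30 * (M0 * K0) + 6 * (C2 * K0) + 1) * lam *
        ((1 + lam * |t - s|) ^ (2 : ℕ))⁻¹ * d⁻¹
      = (30 * (M0 * K0) + 6 * (C2 * K0) + 1) * lam
        / ((1 + lam * |t - s|) ^ (2 : ℕ) * d) := by
    field_simp
  rw [hform, le_div_iff₀ (mul_pos (pow_pos hbase 2) hd2)]
  rcases le_or_gt (lam * |t - s|) 1 with hsmall | hbig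
  · calc X * ((1 + lam * |t - s|) ^ (2 : ℕ) * d)
        = (X * d) * (1 + lam * |t - s|) ^ 2 := by ring
      _ ≤ (X * d) * 4 := by
          apply mul_le_mul_of_nonneg_left _ hXd0
          nlinarith [mul_nonneg hlam0.le hr0]
      _ ≤ ((15 / 2) * (M0 * K0) * lam) * 4 := mul_le_mul_of_nonneg_right hbound1 (by norm_num)
      _ = 30 * (M0 * K0) * lam := by ring
      _ ≤ (30 * (M0 * K0) + 6 * (C2 * K0) + 1) * lam := by
          nlinarith [mul_nonneg hC2K0 hlam0.le, hlam0]
  · calc X * ((1 + lam * |t - s|) ^ (2 : ℕ) * d)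
        = (X * d) * (1 + lam * |t - s|) ^ 2 := by ring
      _ ≤ (X * d) * (4 * (lam * |t - s|) ^ 2) := by
          apply mul_le_mul_of_nonneg_left _ hXd0
          nlinarith [sq_nonneg (lam * |t - s| - 1)]
      _ = 4 * lam * ((X * d) * (lam * |t - s| ^ 2)) := by ring
      _ ≤ 4 * lam * ((3 / 2) * (C2 * K0)) := by
          apply mul_le_mul_of_nonneg_left hbound2 (by linarith)
      _ = 6 * (C2 * K0) * lam := by ring
      _ ≤ (30 * (M0 * K0) + 6 * (C2 * K0) + 1) * lam := by
          nlinarith [mul_nonneg hM0K0 hlam0.le, hlam0]
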